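/- arXiv:2406.18771 — 2 statements merged into one kernel-verified Lean document; each statement's English description precedes it below -/
import Mathlib

section
/- Let μ be a probability measure on ℝ supported in an interval, atomised into N equal-mass pieces: define x₀ = inf(supp μ) and recursively x_{i+1} = inf { x : μ((x_i, x]) ≥ 1/N }. If μ has density ρ₀ ∈ L^p(ℝ) for some p ∈ (1,∞), then the piecewise constant density ρ₀^N(x) = Σ_{k=0}^{N-1} (1/(N(x_{k+1}-x_k))) 𝟙_{[x_k, x_{k+1})}(x) satisfies ‖ρ₀^N‖_{L^p} ≤ ‖ρ₀‖_{L^p}. -/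
open MeasureTheory Real Set
open scoped ENNReal NNReal

lemma jensen_step {p : ℝ} (hp1 : 1 < p) {f : ℝ → ℝ} (hf : Measurable f)
    (hnn : ∀ z, 0 ≤ f z) {a b m : ℝ} (hab : a < b) (hm : 0 < m)
    (hmass : m ≤ ∫ z in Set.Ioc a b, f z)
    (hint : IntegrableOn f (Set.Ioc a b)) :
    ENNReal.ofReal ((m / (b - a)) ^ p * (b - a))
      ≤ ∫⁻ z in Set.Ioc a b, (‖f z‖₊ : ℝ≥0∞) ^ p := by
  have hp0 : 0 < p := lt_trans one_pos hp1
  set L : ℝ := b - a with hL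
  have hLpos : 0 < L := sub_pos.mpr hab
  set I : Set ℝ := Set.Ioc a b with hI
  set V : ℝ≥0∞ := volume I with hV
  have hVeq : V = ENNReal.ofReal L := by rw [hV, hI, Real.volume_Ioc]
  have hV0 : V ≠ 0 := by rw [hVeq]; simp [ENNReal.ofReal_pos.mpr hLpos, (ENNReal.ofReal_pos.mpr hLpos).ne']
  have hVtop : V ≠ ⊤ := by rw [hVeq]; exact ENNReal.ofReal_ne_top
  set B : ℝ≥0∞ := ∫⁻ z in I, (‖f z‖₊ : ℝ≥0∞) ^ p with hB
  -- conjugate exponent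
  set q : ℝ := p / (p - 1) with hq
  have hpq : p.HolderConjugate q := (Real.holderConjugate_iff_eq_conjExponent hp1).mpr hq
  -- Hölder
  have hmeas' : AEMeasurable (fun z => (‖f z‖₊ : ℝ≥0∞)) (volume.restrict I) :=
    (hf.nnnorm.coe_nnreal_ennreal).aemeasurable
  have holder :
      (∫⁻ z in I, (‖f z‖₊ : ℝ≥0∞)) ≤ B ^ (1/p) * V ^ (1/q) := by
    have := ENNReal.lintegral_mul_le_Lp_mul_Lq (volume.restrict I) hpq hmeas'
      (aemeasurable_const (b := (1 : ℝ≥0∞)))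
    simpa [hB, hV, Measure.restrict_apply_univ] using this
  -- lower bound on the L¹ integral
  have hlow : ENNReal.ofReal m ≤ ∫⁻ z in I, (‖f z‖₊ : ℝ≥0∞) := by
    have h1 : ENNReal.ofReal (∫ z in I, f z) = ∫⁻ z in I, ENNReal.ofReal (f z) :=
      ofReal_integral_eq_lintegral_ofReal hint
        (Filter.Eventually.of_forall fun z => hnn z)
    calc ENNReal.ofReal m ≤ ENNReal.ofReal (∫ z in I, f z) := ENNReal.ofReal_le_ofReal hmass
      _ = ∫⁻ z in I, ENNReal.ofReal (f z) := h1
      _ = ∫⁻ z in I, (‖f z‖₊ : ℝ≥0∞) := by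
          refine lintegral_congr fun z => ?_
          rw [← enorm_eq_nnnorm, Real.enorm_eq_ofReal (hnn z)]
  have key : ENNReal.ofReal m ^ p ≤ B * V ^ (p - 1) := by
    have h2 : ENNReal.ofReal m ≤ B ^ (1/p) * V ^ (1/q) := hlow.trans holder
    have h3 := ENNReal.rpow_le_rpow h2 hp0.le
    calc ENNReal.ofReal m ^ p ≤ (B ^ (1/p) * V ^ (1/q)) ^ p := h3
      _ = B ^ ((1/p) * p) * V ^ ((1/q) * p) := by
          rw [ENNReal.mul_rpow_of_nonneg _ _ hp0.le, ← ENNReal.rpow_mul, ← ENNReal.rpow_mul]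
      _ = B * V ^ (p - 1) := by
          rw [one_div, inv_mul_cancel₀ hp0.ne', ENNReal.rpow_one]
          congr 1
          rw [hq]
          field_simp
  -- convert goal
  have hgoal_eq : ENNReal.ofReal ((m / L) ^ p * L) = ENNReal.ofReal m ^ p * V ^ (1 - p) := by
    have hr : (m / L) ^ p * L = m ^ p * L ^ (1 - p) := by
      rw [Real.div_rpow hm.le hLpos.le, Real.rpow_sub hLpos, Real.rpow_one]
      field_simp
    rw [hr, ENNReal.ofReal_mul (Real.rpow_nonneg hm.le p), hVeq,
      ← ENNReal.ofReal_rpow_of_pos hm, ← ENNReal.ofReal_rpow_of_pos hLpos]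
  rw [hgoal_eq]
  calc ENNReal.ofReal m ^ p * V ^ (1 - p)
      ≤ (B * V ^ (p - 1)) * V ^ (1 - p) := mul_le_mul_left key _
    _ = B * (V ^ (p - 1) * V ^ (1 - p)) := by ring
    _ = B := by
        rw [← ENNReal.rpow_add _ _ hV0 hVtop]
        norm_num

/-- Atomisation of a compactly supported probability density `ρ₀ ∈ L^p`: placing
mass `1/N` between consecutive points `x_k` (defined via the recursive infimum
construction), the piecewise constant discrete density has `L^p` norm bounded by
that of `ρ₀`. -/
theorem atomisation_Lp_bound
    (p : ℝ) (hp1 : 1 < p)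
    (ρ₀ : ℝ → ℝ) (hmeas : Measurable ρ₀) (hnn : ∀ z, 0 ≤ ρ₀ z)
    (hsupp : HasCompactSupport ρ₀) (hint : Integrable ρ₀)
    (hmass : (∫ z : ℝ, ρ₀ z) = 1)
    (hLp : Integrable (fun z : ℝ => ρ₀ z ^ p))
    (N : ℕ) (hN : 1 ≤ N) (x : ℕ → ℝ)
    (hx0 : x 0 = sInf (Function.support ρ₀))
    (hrec : ∀ k < N, x (k + 1)
      = sInf {s : ℝ | (1 : ℝ) / N ≤ ∫ z in Set.Ioc (x k) s, ρ₀ z})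
    (hinc : ∀ k < N, x k < x (k + 1)) :
    eLpNorm
      (fun z : ℝ => ∑ k ∈ Finset.range N,
        Set.indicator (Set.Ico (x k) (x (k + 1)))
          (fun _ => 1 / ((N : ℝ) * (x (k + 1) - x k))) z)
      (ENNReal.ofReal p) volume
      ≤ eLpNorm ρ₀ (ENNReal.ofReal p) volume := by
  have hp0 : 0 < p := lt_trans one_pos hp1
  have hNpos : (0:ℝ) < N := by exact_mod_cast hN
  set c : ℕ → ℝ := fun k => 1 / ((N : ℝ) * (x (k + 1) - x k)) with hc
  -- continuity of the cumulative mass function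
  have hii : ∀ u v : ℝ, IntervalIntegrable ρ₀ volume u v := fun u v => hint.intervalIntegrable
  have hcont : ∀ a : ℝ, Continuous fun s => ∫ z in Set.Ioc a s, ρ₀ z := by
    intro a
    have h2 := intervalIntegral.continuous_primitive hii a
    have h3 : (fun s => ∫ z in Set.Ioc a s, ρ₀ z)
        = (fun s => ∫ u in a..(max a s), ρ₀ u) := by
      funext s
      rcases le_total a s with h | h
      · rw [max_eq_right h, intervalIntegral.integral_of_le h]
      · rw [max_eq_left h, intervalIntegral.integral_same, Set.Ioc_eq_empty (not_lt.mpr h),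
          Measure.restrict_empty, integral_zero_measure]
    rw [h3]
    exact h2.comp (continuous_const.max continuous_id)
  -- support bound above
  obtain ⟨R, hR0⟩ : ∃ R : ℝ, R ∈ upperBounds (tsupport ρ₀) := hsupp.isCompact.bddAbove
  have hR : ∀ z, R < z → ρ₀ z = 0 := fun z hz =>
    image_eq_zero_of_notMem_tsupport (fun hmem => absurd (hR0 hmem) (not_le.mpr hz))
  -- splitting
  have hsplit : ∀ a b : ℝ, a ≤ b →
      (∫ z in Set.Ioi a, ρ₀ z) = (∫ z in Set.Ioc a b, ρ₀ z) + ∫ z in Set.Ioi b, ρ₀ z := by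
    intro a b hab
    rw [← Set.Ioc_union_Ioi_eq_Ioi hab,
      setIntegral_union (Set.Ioc_disjoint_Ioi le_rfl) measurableSet_Ioi
        hint.integrableOn hint.integrableOn]
  have hvanish : ∀ b : ℝ, R ≤ b → (∫ z in Set.Ioi b, ρ₀ z) = 0 := by
    intro b hb
    rw [setIntegral_congr_fun measurableSet_Ioi
      (fun z hz => hR z (lt_of_le_of_lt hb hz))]
    exact integral_zero _ _
  have htail : ∀ a b : ℝ, R ≤ b → a ≤ b →
      (∫ z in Set.Ioc a b, ρ₀ z) = ∫ z in Set.Ioi a, ρ₀ z := by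
    intro a b hRb hab
    have := hsplit a b hab
    rw [hvanish b hRb] at this
    linarith
  -- mass above x 0 is 1
  have hM0 : (∫ z in Set.Ioi (x 0), ρ₀ z) = 1 := by
    have hzero : ∀ z ∈ Set.Iio (x 0), ρ₀ z = (0 : ℝ → ℝ) z := by
      intro z hz
      by_contra h
      have hzsupp : z ∈ Function.support ρ₀ := h
      have hbdd : BddBelow (Function.support ρ₀) :=
        BddBelow.mono (subset_tsupport ρ₀) hsupp.isCompact.bddBelow
      have := csInf_le hbdd hzsupp
      rw [← hx0] at this
      exact absurd this (not_le.mpr hz)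
    have h1 : (∫ z in Set.Iic (x 0), ρ₀ z) = 0 := by
      rw [show (volume : Measure ℝ).restrict (Set.Iic (x 0))
            = volume.restrict (Set.Iio (x 0)) from
          (Measure.restrict_congr_set Iio_ae_eq_Iic).symm,
        setIntegral_congr_fun measurableSet_Iio hzero]
      simp
    have h2 := intervalIntegral.integral_Iic_add_Ioi (b := x 0) hint.integrableOn hint.integrableOn
    rw [hmass, h1] at h2
    linarith
  -- the two-sided bound on interval masses, given enough mass remains
  have hmemS : ∀ k, k < N → ((1:ℝ)/N ≤ ∫ z in Set.Ioi (x k), ρ₀ z) →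
      ((1:ℝ)/N ≤ ∫ z in Set.Ioc (x k) (x (k+1)), ρ₀ z)
        ∧ (∫ z in Set.Ioc (x k) (x (k+1)), ρ₀ z) ≤ 1/N := by
    intro k hk hMk
    set F : ℝ → ℝ := fun s => ∫ z in Set.Ioc (x k) s, ρ₀ z with hF
    set S : Set ℝ := {s : ℝ | (1:ℝ)/N ≤ F s} with hS
    have hNinv : (0:ℝ) < 1/N := by positivity
    have hSne : S.Nonempty := by
      refine ⟨max R (x k), ?_⟩
      show (1:ℝ)/N ≤ F (max R (x k))
      rw [hF]
      simp only
      rw [htail (x k) (max R (x k)) (le_max_left _ _) (le_max_right _ _)]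
      exact hMk
    have hbddS : BddBelow S := by
      refine ⟨x k, fun s hs => ?_⟩
      by_contra hcon
      push_neg at hcon
      have : F s = 0 := by
        rw [hF]; simp only
        rw [Set.Ioc_eq_empty (not_lt.mpr hcon.le), Measure.restrict_empty,
          integral_zero_measure]
      have hs' : (1:ℝ)/N ≤ F s := hs
      rw [this] at hs'
      linarith
    have hclosed : IsClosed S := by
      have : S = F ⁻¹' (Set.Ici ((1:ℝ)/N)) := rfl
      rw [this]
      exact IsClosed.preimage (hcont (x k)) isClosed_Ici
    have hxk1 : x (k+1) = sInf S := hrec k hk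
    have hmem : x (k+1) ∈ S := by rw [hxk1]; exact hclosed.csInf_mem hSne hbddS
    refine ⟨hmem, ?_⟩
    -- upper bound via left limits
    have hub : ∀ s ∈ Set.Iio (x (k+1)), F s ≤ 1/N := by
      intro s hs
      have : s ∉ S := by
        rw [hxk1] at hs
        exact fun hsS => absurd hs (not_lt.mpr (csInf_le hbddS hsS))
      exact le_of_not_ge this
    have htd : Filter.Tendsto F (nhdsWithin (x (k+1)) (Set.Iio (x (k+1))))
        (nhds (F (x (k+1)))) :=
      ((hcont (x k)).tendsto _).mono_left nhdsWithin_le_nhds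
    exact le_of_tendsto htd (Filter.eventually_of_mem self_mem_nhdsWithin hub)
  -- remaining mass by induction
  have key : ∀ k, k ≤ N → ((N:ℝ) - k)/N ≤ ∫ z in Set.Ioi (x k), ρ₀ z := by
    intro k
    induction k with
    | zero =>
      intro _
      rw [hM0]
      simp only [Nat.cast_zero, sub_zero]
      rw [div_self hNpos.ne']
    | succ k ih =>
      intro hk1
      have hk : k < N := hk1
      have ihk := ih hk.le
      have hcastk : ((k:ℝ)) + 1 ≤ (N:ℝ) := by exact_mod_cast hk1
      have h1N : (1:ℝ)/N ≤ ∫ z in Set.Ioi (x k), ρ₀ z := by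
        refine le_trans ?_ ihk
        gcongr
        linarith
      obtain ⟨hlo, hhi⟩ := hmemS k hk h1N
      have hsp := hsplit (x k) (x (k+1)) (hinc k hk).le
      have hcast : ((N:ℝ) - ((k:ℝ)+1))/N = ((N:ℝ) - k)/N - 1/N := by
        ring
      push_cast
      linarith
  have hlow : ∀ k, k < N → (1:ℝ)/N ≤ ∫ z in Set.Ioc (x k) (x (k+1)), ρ₀ z := by
    intro k hk
    refine (hmemS k hk ?_).1
    refine le_trans ?_ (key k hk.le)
    gcongr
    have : ((k:ℝ)) + 1 ≤ (N:ℝ) := by exact_mod_cast hk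
    linarith
  -- monotonicity of the partition points
  have hmono : ∀ i j, i ≤ j → j ≤ N → x i ≤ x j := by
    intro i j hij hjN
    induction j with
    | zero => obtain rfl : i = 0 := Nat.le_zero.mp hij; exact le_rfl
    | succ j ihj =>
      rcases Nat.le_succ_iff_eq_or_le.mp hij with h | h
      · exact le_of_eq (by rw [h])
      · exact le_trans (ihj h (by omega)) (hinc j (by omega)).le
  -- positivity of constants
  have hcpos : ∀ k, k < N → 0 < c k := by
    intro k hk
    have h := sub_pos.mpr (hinc k hk)
    rw [hc]
    exact div_pos one_pos (mul_pos hNpos h)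
  -- pairwise disjointness helpers
  have hnotmem : ∀ j k, j ≤ N → k ≤ N → j ≠ k → ∀ z : ℝ,
      z ∈ Set.Ico (x j) (x (j+1)) → z ∉ Set.Ico (x k) (x (k+1)) := by
    intro j k hj hk hjk z hzj hzk
    rcases lt_or_gt_of_ne hjk with h | h
    · have h1 : x (j+1) ≤ x k := hmono (j+1) k h hk
      have := hzj.2
      have := hzk.1
      linarith
    · have h1 : x (k+1) ≤ x j := hmono (k+1) j h hj
      have := hzk.2
      have := hzj.1
      linarith
  -- pointwise identity for the p-th power of the step function
  have hpt : ∀ z : ℝ,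
      ((‖∑ k ∈ Finset.range N,
          Set.indicator (Set.Ico (x k) (x (k + 1))) (fun _ => c k) z‖₊ : ℝ≥0∞)) ^ p
        = ∑ k ∈ Finset.range N,
            Set.indicator (Set.Ico (x k) (x (k + 1)))
              (fun _ => ENNReal.ofReal (c k) ^ p) z := by
    intro z
    by_cases hz : ∃ j ∈ Finset.range N, z ∈ Set.Ico (x j) (x (j+1))
    · obtain ⟨j, hjm, hzj⟩ := hz
      have hjN := Finset.mem_range.mp hjm
      have h1 : (∑ k ∈ Finset.range N,
          Set.indicator (Set.Ico (x k) (x (k + 1))) (fun _ => c k) z) = c j := by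
        rw [Finset.sum_eq_single_of_mem j hjm]
        · rw [Set.indicator_of_mem hzj]
        · intro b hb hbj
          exact Set.indicator_of_notMem
            (hnotmem j b hjN.le (Finset.mem_range.mp hb).le (fun h => hbj h.symm) z hzj) _
      have h2 : (∑ k ∈ Finset.range N,
          Set.indicator (Set.Ico (x k) (x (k + 1)))
            (fun _ => ENNReal.ofReal (c k) ^ p) z) = ENNReal.ofReal (c j) ^ p := by
        rw [Finset.sum_eq_single_of_mem j hjm]
        · rw [Set.indicator_of_mem hzj]
        · intro b hb hbj
          exact Set.indicator_of_notMem
            (hnotmem j b hjN.le (Finset.mem_range.mp hb).le (fun h => hbj h.symm) z hzj) _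
      rw [h1, h2, ← enorm_eq_nnnorm, Real.enorm_eq_ofReal (hcpos j hjN).le]
    · push_neg at hz
      have h1 : (∑ k ∈ Finset.range N,
          Set.indicator (Set.Ico (x k) (x (k + 1))) (fun _ => c k) z) = 0 :=
        Finset.sum_eq_zero fun k hk => Set.indicator_of_notMem (hz k hk) _
      have h2 : (∑ k ∈ Finset.range N,
          Set.indicator (Set.Ico (x k) (x (k + 1)))
            (fun _ => ENNReal.ofReal (c k) ^ p) z) = 0 :=
        Finset.sum_eq_zero fun k hk => Set.indicator_of_notMem (hz k hk) _
      rw [h1, h2]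
      simp [ENNReal.zero_rpow_of_pos hp0]
  -- disjointness of the Ioc intervals
  have hdisj : (↑(Finset.range N) : Set ℕ).PairwiseDisjoint
      (fun k => Set.Ioc (x k) (x (k+1))) := by
    intro i hi j hj hij
    have hiN := Finset.mem_range.mp (Finset.mem_coe.mp hi)
    have hjN := Finset.mem_range.mp (Finset.mem_coe.mp hj)
    refine Set.disjoint_left.mpr fun z hzi hzj => ?_
    rcases lt_or_gt_of_ne hij with h | h
    · have h1 : x (i+1) ≤ x j := hmono (i+1) j h hjN.le
      have := hzi.2
      have := hzj.1
      linarith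
    · have h1 : x (j+1) ≤ x i := hmono (j+1) i h hiN.le
      have := hzj.2
      have := hzi.1
      linarith
  -- rewrite both eLpNorms
  have hP0 : (ENNReal.ofReal p) ≠ 0 := by
    simp only [ne_eq, ENNReal.ofReal_eq_zero, not_le]
    exact hp0
  have hPtop : (ENNReal.ofReal p) ≠ ⊤ := ENNReal.ofReal_ne_top
  rw [eLpNorm_eq_lintegral_rpow_enorm_toReal hP0 hPtop,
    eLpNorm_eq_lintegral_rpow_enorm_toReal hP0 hPtop, ENNReal.toReal_ofReal hp0.le]
  refine ENNReal.rpow_le_rpow ?_ (by positivity)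
  -- the main lintegral estimate
  calc ∫⁻ z, (‖∑ k ∈ Finset.range N,
        Set.indicator (Set.Ico (x k) (x (k + 1))) (fun _ => c k) z‖₊ : ℝ≥0∞) ^ p
      = ∫⁻ z, ∑ k ∈ Finset.range N,
          Set.indicator (Set.Ico (x k) (x (k + 1)))
            (fun _ => ENNReal.ofReal (c k) ^ p) z := lintegral_congr hpt
    _ = ∑ k ∈ Finset.range N, ∫⁻ z,
          Set.indicator (Set.Ico (x k) (x (k + 1)))
            (fun _ => ENNReal.ofReal (c k) ^ p) z := by
        exact lintegral_finset_sum _ fun k _ =>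
          (measurable_const.indicator measurableSet_Ico)
    _ = ∑ k ∈ Finset.range N,
          ENNReal.ofReal (c k) ^ p * volume (Set.Ico (x k) (x (k+1))) := by
        refine Finset.sum_congr rfl fun k _ => ?_
        rw [lintegral_indicator measurableSet_Ico, setLIntegral_const]
    _ ≤ ∑ k ∈ Finset.range N, ∫⁻ z in Set.Ioc (x k) (x (k+1)), (‖ρ₀ z‖₊ : ℝ≥0∞) ^ p := by
        refine Finset.sum_le_sum fun k hk => ?_
        have hkN := Finset.mem_range.mp hk
        have hxx := hinc k hkN
        have hLk : (0:ℝ) < x (k+1) - x k := sub_pos.mpr hxx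
        have hcv : c k = (1/(N:ℝ)) / (x (k+1) - x k) := by
          rw [hc]
          simp only
          rw [div_div]
        have heq : ENNReal.ofReal (c k) ^ p * volume (Set.Ico (x k) (x (k+1)))
            = ENNReal.ofReal (((1/(N:ℝ)) / (x (k+1) - x k)) ^ p * (x (k+1) - x k)) := by
          rw [Real.volume_Ico, ← hcv,
            ENNReal.ofReal_mul (Real.rpow_nonneg (hcpos k hkN).le p),
            ← ENNReal.ofReal_rpow_of_pos (hcpos k hkN)]
        rw [heq]
        exact jensen_step hp1 hmeas hnn hxx (by positivity) (hlow k hkN) hint.integrableOn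
    _ = ∫⁻ z in ⋃ k ∈ Finset.range N, Set.Ioc (x k) (x (k+1)), (‖ρ₀ z‖₊ : ℝ≥0∞) ^ p :=
        (lintegral_biUnion_finset hdisj (fun k _ => measurableSet_Ioc) _).symm
    _ ≤ ∫⁻ z, (‖ρ₀ z‖₊ : ℝ≥0∞) ^ p := setLIntegral_le_lintegral _ _
end

section
/- Let (X, d) be a complete metric space and let γ_τ : [0,T] → X, τ > 0, be a family of curves satisfying d(γ_τ(s), γ_τ(t)) ≤ c(√|t-s| + √τ) for all s,t ∈ [0,T] and some c > 0 independent of τ, with all values γ_τ(t) contained in a fixed compact set K ⊂ X. Then there exists a sequence τ_k ↓ 0 and a (1/2)-Hölder continuous curve γ : [0,T] → X such that γ_{τ_k}(t) → γ(t) for every t ∈ [0,T]. -/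
open Real Set Filter

private lemma exists_rat_near_icc (T : ℝ) (hT : 0 < T) {t : ℝ}
    (ht : t ∈ Icc (0:ℝ) T) {δ : ℝ} (hδ : 0 < δ) :
    ∃ q : ℚ, (q:ℝ) ∈ Icc (0:ℝ) T ∧ |t - (q:ℝ)| < δ := by
  obtain ⟨ht0, htT⟩ := ht
  by_cases h : t < T
  · have hlt : t < min (t + δ) T := lt_min (by linarith) h
    obtain ⟨q, hq1, hq2⟩ := exists_rat_btwn hlt
    have hq2' : (q:ℝ) < t + δ := lt_of_lt_of_le hq2 (min_le_left _ _)
    have hq2'' : (q:ℝ) ≤ T := le_of_lt (lt_of_lt_of_le hq2 (min_le_right _ _))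
    exact ⟨q, ⟨by linarith, hq2''⟩, abs_lt.mpr ⟨by linarith, by linarith⟩⟩
  · have htT' : t = T := le_antisymm htT (not_lt.mp h)
    have hlt : max 0 (T - δ) < T := max_lt hT (by linarith)
    obtain ⟨q, hq1, hq2⟩ := exists_rat_btwn hlt
    have hq0 : (0:ℝ) ≤ q := le_of_lt (lt_of_le_of_lt (le_max_left _ _) hq1)
    have hqδ : T - δ < (q:ℝ) := lt_of_le_of_lt (le_max_right _ _) hq1
    exact ⟨q, ⟨hq0, le_of_lt hq2⟩, abs_lt.mpr ⟨by linarith, by linarith⟩⟩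

/-- Refined Ascoli–Arzelà: a family of curves `γ_τ : [0,T] → X` with values in a
fixed compact set and equi-continuity modulus `c(√|t-s| + √τ)` admits a sequence
`τ_k ↓ 0` along which the curves converge pointwise to a `(1/2)`-Hölder curve. -/
theorem refined_ascoli_arzela
    {X : Type*} [MetricSpace X] [CompleteSpace X]
    (γ : ℝ → ℝ → X) (T c : ℝ) (hT : 0 < T) (hc : 0 < c)
    (K : Set X) (hK : IsCompact K)
    (hval : ∀ τ : ℝ, 0 < τ → ∀ t ∈ Icc (0:ℝ) T, γ τ t ∈ K)
    (hmod : ∀ τ : ℝ, 0 < τ → ∀ s ∈ Icc (0:ℝ) T, ∀ t ∈ Icc (0:ℝ) T,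
      dist (γ τ s) (γ τ t) ≤ c * (Real.sqrt |t - s| + Real.sqrt τ)) :
    ∃ τk : ℕ → ℝ, (∀ k, 0 < τk k) ∧ StrictAnti τk ∧
      Tendsto τk atTop (nhds 0) ∧
      ∃ γlim : ℝ → X,
        (∃ c' : ℝ, 0 < c' ∧ ∀ s ∈ Icc (0:ℝ) T, ∀ t ∈ Icc (0:ℝ) T,
          dist (γlim s) (γlim t) ≤ c' * Real.sqrt |t - s|) ∧
        ∀ t ∈ Icc (0:ℝ) T,
          Tendsto (fun k : ℕ => γ (τk k) t) atTop (nhds (γlim t)) := by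
  haveI : Nonempty X := ⟨γ 1 0⟩
  -- base sequence
  set σ : ℕ → ℝ := fun k => (1/2 : ℝ) ^ k with hσdef
  have hσpos : ∀ k, 0 < σ k := fun k => pow_pos (by norm_num) k
  have hσanti : StrictAnti σ := fun a b h =>
    pow_lt_pow_right_of_lt_one₀ (by norm_num) (by norm_num) h
  have hσ0 : Tendsto σ atTop (nhds 0) :=
    tendsto_pow_atTop_nhds_zero_of_lt_one (by norm_num) (by norm_num)
  -- countable dense index set
  set ι := {q : ℚ // (q:ℝ) ∈ Icc (0:ℝ) T}
  -- sequence of functions in compact product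
  set F : ℕ → ι → X := fun k q => γ (σ k) (q:ℝ) with hFdef
  have hS : IsCompact (Set.pi (univ : Set ι) fun _ => K) :=
    isCompact_univ_pi fun _ => hK
  have hFmem : ∀ k, F k ∈ Set.pi (univ : Set ι) fun _ => K := by
    intro k q _
    exact hval (σ k) (hσpos k) _ q.2
  obtain ⟨f, -, φ, hφ, hconv⟩ := hS.tendsto_subseq hFmem
  have hfq : ∀ q : ι, Tendsto (fun k => γ (σ (φ k)) (q:ℝ)) atTop (nhds (f q)) := by
    intro q
    exact tendsto_pi_nhds.mp hconv q
  set τk : ℕ → ℝ := fun k => σ (φ k) with hτdef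
  have hτpos : ∀ k, 0 < τk k := fun k => hσpos (φ k)
  have hτanti : StrictAnti τk := hσanti.comp_strictMono hφ
  have hτ0 : Tendsto τk atTop (nhds 0) := hσ0.comp hφ.tendsto_atTop
  have hsqrtτ : Tendsto (fun k => Real.sqrt (τk k)) atTop (nhds 0) := by
    have := (Real.continuous_sqrt.continuousAt (x := (0:ℝ))).tendsto.comp hτ0
    simpa [Function.comp_def] using this
  -- Cauchy at every t ∈ Icc
  have hcauchy : ∀ t ∈ Icc (0:ℝ) T, CauchySeq (fun k => γ (τk k) t) := by
    intro t ht
    rw [Metric.cauchySeq_iff]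
    intro ε hε
    have hδ : (0:ℝ) < (ε / (8 * c)) ^ 2 := by positivity
    obtain ⟨q, hqI, hqd⟩ := exists_rat_near_icc T hT ht hδ
    have hsq : c * Real.sqrt |t - (q:ℝ)| ≤ ε / 8 := by
      have h1 : Real.sqrt |t - (q:ℝ)| ≤ Real.sqrt ((ε / (8 * c)) ^ 2) :=
        Real.sqrt_le_sqrt (le_of_lt hqd)
      have h2 : Real.sqrt ((ε / (8 * c)) ^ 2) = ε / (8 * c) :=
        Real.sqrt_sq (by positivity)
      have h3 : Real.sqrt |t - (q:ℝ)| ≤ ε / (8 * c) := h2 ▸ h1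
      calc c * Real.sqrt |t - (q:ℝ)| ≤ c * (ε / (8 * c)) := by
            exact mul_le_mul_of_nonneg_left h3 (le_of_lt hc)
        _ = ε / 8 := by field_simp
    -- eventual smallness of c√τ
    have hcs : Tendsto (fun k => c * Real.sqrt (τk k)) atTop (nhds 0) := by
      simpa using hsqrtτ.const_mul c
    have h8 : (0:ℝ) < ε / 8 := by linarith
    obtain ⟨N1, hN1⟩ := (eventually_atTop.mp (hcs.eventually_lt_const h8))
    -- convergence at q
    obtain ⟨N2, hN2⟩ := Metric.tendsto_atTop.mp (hfq ⟨q, hqI⟩) (ε / 8) h8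
    refine ⟨max N1 N2, fun m hm n hn => ?_⟩
    have hm1 := hN1 m (le_trans (le_max_left _ _) hm)
    have hn1 := hN1 n (le_trans (le_max_left _ _) hn)
    have hm2 := hN2 m (le_trans (le_max_right _ _) hm)
    have hn2 := hN2 n (le_trans (le_max_right _ _) hn)
    have hbm : dist (γ (τk m) t) (γ (τk m) (q:ℝ)) ≤ ε / 8 + ε / 8 := by
      have := hmod (τk m) (hτpos m) t ht (q:ℝ) hqI
      have h' : c * (Real.sqrt |(q:ℝ) - t| + Real.sqrt (τk m))
          = c * Real.sqrt |t - (q:ℝ)| + c * Real.sqrt (τk m) := by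
        rw [abs_sub_comm]; ring
      calc dist (γ (τk m) t) (γ (τk m) (q:ℝ)) ≤
            c * Real.sqrt |t - (q:ℝ)| + c * Real.sqrt (τk m) := by rw [← h']; exact this
        _ ≤ ε / 8 + ε / 8 := add_le_add hsq (le_of_lt hm1)
    have hbn : dist (γ (τk n) t) (γ (τk n) (q:ℝ)) ≤ ε / 8 + ε / 8 := by
      have := hmod (τk n) (hτpos n) t ht (q:ℝ) hqI
      have h' : c * (Real.sqrt |(q:ℝ) - t| + Real.sqrt (τk n))
          = c * Real.sqrt |t - (q:ℝ)| + c * Real.sqrt (τk n) := by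
        rw [abs_sub_comm]; ring
      calc dist (γ (τk n) t) (γ (τk n) (q:ℝ)) ≤
            c * Real.sqrt |t - (q:ℝ)| + c * Real.sqrt (τk n) := by rw [← h']; exact this
        _ ≤ ε / 8 + ε / 8 := add_le_add hsq (le_of_lt hn1)
    have key : dist (γ (τk m) t) (γ (τk n) t) ≤
        dist (γ (τk m) t) (γ (τk m) (q:ℝ)) + dist (γ (τk m) (q:ℝ)) (f ⟨q, hqI⟩)
        + dist (f ⟨q, hqI⟩) (γ (τk n) (q:ℝ)) + dist (γ (τk n) (q:ℝ)) (γ (τk n) t) := by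
      calc dist (γ (τk m) t) (γ (τk n) t)
          ≤ dist (γ (τk m) t) (f ⟨q, hqI⟩) + dist (f ⟨q, hqI⟩) (γ (τk n) t) :=
            dist_triangle _ _ _
        _ ≤ (dist (γ (τk m) t) (γ (τk m) (q:ℝ)) + dist (γ (τk m) (q:ℝ)) (f ⟨q, hqI⟩))
            + (dist (f ⟨q, hqI⟩) (γ (τk n) (q:ℝ)) + dist (γ (τk n) (q:ℝ)) (γ (τk n) t)) :=
            add_le_add (dist_triangle _ _ _) (dist_triangle _ _ _)
        _ = _ := by ring
    have hm2' : dist (γ (τk m) (q:ℝ)) (f ⟨q, hqI⟩) < ε / 8 := hm2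
    have hn2' : dist (f ⟨q, hqI⟩) (γ (τk n) (q:ℝ)) < ε / 8 := by
      rw [dist_comm]; exact hn2
    have hqt : dist (γ (τk n) (q:ℝ)) (γ (τk n) t) = dist (γ (τk n) t) (γ (τk n) (q:ℝ)) :=
      dist_comm _ _
    rw [hqt] at key
    linarith
  -- the limit curve
  set γlim : ℝ → X := fun t => limUnder atTop (fun k => γ (τk k) t) with hγlimdef
  have htend : ∀ t ∈ Icc (0:ℝ) T,
      Tendsto (fun k : ℕ => γ (τk k) t) atTop (nhds (γlim t)) := by
    intro t ht
    obtain ⟨a, ha⟩ := cauchySeq_tendsto_of_complete (hcauchy t ht)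
    have : γlim t = a := ha.limUnder_eq
    rw [this]; exact ha
  refine ⟨τk, hτpos, hτanti, hτ0, γlim, ⟨c, hc, ?_⟩, htend⟩
  intro s hs t ht
  have hd : Tendsto (fun k => dist (γ (τk k) s) (γ (τk k) t)) atTop
      (nhds (dist (γlim s) (γlim t))) := (htend s hs).dist (htend t ht)
  have hrhs : Tendsto (fun k => c * (Real.sqrt |t - s| + Real.sqrt (τk k))) atTop
      (nhds (c * Real.sqrt |t - s|)) := by
    have := ((tendsto_const_nhds (x := Real.sqrt |t - s|) (f := atTop (α := ℕ))).add
      hsqrtτ).const_mul c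
    simpa using this
  exact le_of_tendsto_of_tendsto' hd hrhs fun k =>
    hmod (τk k) (hτpos k) s hs t ht
end
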